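/- For the random effects model y = Xβ + u + e with u ~ N(0, A I_m), e ~ N(0, V I_m) independent, and X of full column rank p < m, the estimator θ̂^B = (1-B)y + B P_X y (where B = V/(V+A), P_X = X(X^T X)^{-1} X^T) is the best linear unbiased predictor of θ = Xβ + u: among all predictors of the form Cy + b satisfying E[Cy + b] = E[θ] for all β, the choice C = (1-B)I_m + B P_X, b = 0 minimizes the mean squared prediction error matrix E[(Cy+b-θ)(Cy+b-θ)^T] in the Loewner order. -/

import Mathlib

open Matrix MeasureTheory

noncomputable def projX {m p : ℕ} (X : Matrix (Fin m) (Fin p) ℝ) : Matrix (Fin m) (Fin m) ℝ :=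
  X * (Xᵀ * X)⁻¹ * Xᵀ

/-!
Unbiasedness for every `β` forces `b = 0` and `C X = X`; the prediction error is then
`C y - θ = (C - 1) u + C e`, with second-moment matrix `A (C - 1)(C - 1)ᵀ + V C Cᵀ`. Writing
`C = C₀ + D` with `C₀ = (1 - B) I + B P_X`, the cross terms vanish because
`A (C₀ - 1) + V C₀ = V P_X` (this is what `B = V / (V + A)` is chosen for) and `D P_X = 0`
(as `D X = 0`), which leaves the difference `(A + V) D Dᵀ ⪰ 0`.
-/

namespace Matrix

variable {m n : Type*} [Fintype n]

theorem isUnit_of_rank_eq_card [DecidableEq n] {K : Type*} [Field K] {M : Matrix n n K}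
    (h : M.rank = Fintype.card n) : IsUnit M := by
  rw [← mulVec_surjective_iff_isUnit]
  change Function.Surjective M.mulVecLin
  rw [← LinearMap.range_eq_top]
  exact Submodule.eq_top_of_finrank_eq (by rw [Module.finrank_fintype_fun_eq_card]; exact h)

theorem isUnit_transpose_mul_self_of_rank_eq_card [DecidableEq n] {R : Type*} [Fintype m]
    [Field R] [LinearOrder R] [IsStrictOrderedRing R] {X : Matrix m n R}
    (h : X.rank = Fintype.card n) :
    IsUnit (Xᵀ * X) :=
  isUnit_of_rank_eq_card (by rw [rank_transpose_mul_self, h])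

theorem forall_mulVec_add_eq_iff {R : Type*} [Fintype m] [CommRing R] {C : Matrix m m R}
    {X : Matrix m n R} {b : m → R} :
    (∀ β, C *ᵥ (X *ᵥ β) + b = X *ᵥ β) ↔ b = 0 ∧ C * X = X := by
  constructor
  · intro h
    have hb : b = 0 := by simpa using h 0
    refine ⟨hb, ext_iff_mulVec.2 fun β => ?_⟩
    simpa [hb, ← mulVec_mulVec] using h β
  · rintro ⟨rfl, h⟩ β
    rw [mulVec_mulVec, h, add_zero]

end Matrix

section projX

variable {m p : ℕ} (X : Matrix (Fin m) (Fin p) ℝ)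

theorem projX_mul_self (hX : IsUnit (Xᵀ * X)) : projX X * X = X := by
  rw [projX, Matrix.mul_assoc, Matrix.mul_assoc,
    nonsing_inv_mul _ ((isUnit_iff_isUnit_det _).1 hX), Matrix.mul_one]

theorem transpose_projX : (projX X)ᵀ = projX X := by
  simp [projX, transpose_nonsing_inv, Matrix.mul_assoc]

end projX

section Moments

variable {Ω ι κ ι' κ' : Type*} [MeasurableSpace Ω] {P : Measure Ω}

noncomputable def crossMoment (P : Measure Ω) (w : Ω → ι → ℝ) (z : Ω → κ → ℝ) :
    Matrix ι κ ℝ :=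
  of fun k l => ∫ ω, w ω k * z ω l ∂P

theorem transpose_crossMoment (w : Ω → ι → ℝ) (z : Ω → κ → ℝ) :
    (crossMoment P w z)ᵀ = crossMoment P z w := by
  ext k l
  simp only [crossMoment, transpose_apply, of_apply, mul_comm]

theorem memLp_mulVec_apply [Fintype ι] {p : ENNReal} {w : Ω → ι → ℝ}
    (hw : ∀ k, MemLp (fun ω => w ω k) p P) (M : Matrix ι' ι ℝ) (i : ι') :
    MemLp (fun ω => (M *ᵥ w ω) i) p P := by
  simp only [mulVec, dotProduct]
  exact memLp_finsetSum _ fun k _ => (hw k).const_mul _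

theorem integral_mulVec_apply [Fintype ι] {w : Ω → ι → ℝ}
    (hw : ∀ k, Integrable (fun ω => w ω k) P) (M : Matrix ι' ι ℝ) (i : ι') :
    ∫ ω, (M *ᵥ w ω) i ∂P = (M *ᵥ fun k => ∫ ω, w ω k ∂P) i := by
  simp only [mulVec, dotProduct]
  rw [integral_finsetSum _ fun k _ => (hw k).const_mul _]
  simp only [integral_const_mul]

theorem integral_mulVec_add_apply_add_of_integral_eq_zero [Fintype ι] [IsProbabilityMeasure P]
    {w : Ω → ι → ℝ} (hw : ∀ k, Integrable (fun ω => w ω k) P)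
    (hw0 : ∀ k, ∫ ω, w ω k ∂P = 0)
    (M : Matrix ι' ι ℝ) (v : ι → ℝ) (b : ι' → ℝ) (i : ι') :
    ∫ ω, (M *ᵥ (v + w ω)) i + b i ∂P = (M *ᵥ v) i + b i := by
  have hMw : Integrable (fun ω => (M *ᵥ w ω) i) P :=
    memLp_one_iff_integrable.1 <|
      memLp_mulVec_apply (fun k => memLp_one_iff_integrable.2 (hw k)) M i
  have hvMw : Integrable (fun ω => (M *ᵥ v) i + (M *ᵥ w ω) i) P :=
    (integrable_const _).add hMw
  simp only [mulVec_add, Pi.add_apply]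
  rw [integral_add hvMw (integrable_const _),
    integral_add (integrable_const _) hMw, integral_mulVec_apply hw]
  simp [hw0, mulVec, dotProduct]

theorem crossMoment_mulVec [Fintype ι] [Fintype κ] {w : Ω → ι → ℝ} {z : Ω → κ → ℝ}
    (hw : ∀ k, MemLp (fun ω => w ω k) 2 P) (hz : ∀ l, MemLp (fun ω => z ω l) 2 P)
    (M : Matrix ι' ι ℝ) (N : Matrix κ' κ ℝ) :
    crossMoment P (fun ω => M *ᵥ w ω) (fun ω => N *ᵥ z ω)
      = M * crossMoment P w z * Nᵀ := by
  ext i j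
  have hint : ∀ k l, Integrable (fun ω => M i k * N j l * (w ω k * z ω l)) P :=
    fun k l => ((hw k).integrable_mul (hz l)).const_mul _
  calc ∫ ω, (M *ᵥ w ω) i * (N *ᵥ z ω) j ∂P
      = ∫ ω, ∑ k, ∑ l, M i k * N j l * (w ω k * z ω l) ∂P := by
        congr 1; ext ω
        simp only [mulVec, dotProduct, Finset.sum_mul_sum]
        exact Finset.sum_congr rfl fun _ _ => Finset.sum_congr rfl fun _ _ => by ring
    _ = ∑ k, ∑ l, M i k * N j l * ∫ ω, w ω k * z ω l ∂P := by
        rw [integral_finsetSum _ fun k _ => integrable_finsetSum _ fun l _ => hint k l]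
        refine Finset.sum_congr rfl fun k _ => ?_
        rw [integral_finsetSum _ fun l _ => hint k l]
        simp only [integral_const_mul]
    _ = (M * crossMoment P w z * Nᵀ) i j := by
        simp only [mul_apply, transpose_apply, crossMoment, of_apply, Finset.sum_mul]
        rw [Finset.sum_comm]
        exact Finset.sum_congr rfl fun _ _ => Finset.sum_congr rfl fun _ _ => by ring

theorem crossMoment_add_left {w w' : Ω → ι → ℝ} {z : Ω → κ → ℝ}
    (hw : ∀ k, MemLp (fun ω => w ω k) 2 P) (hw' : ∀ k, MemLp (fun ω => w' ω k) 2 P)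
    (hz : ∀ l, MemLp (fun ω => z ω l) 2 P) :
    crossMoment P (w + w') z = crossMoment P w z + crossMoment P w' z := by
  ext k l
  simp only [crossMoment, of_apply, Matrix.add_apply, Pi.add_apply, add_mul]
  exact integral_add ((hw k).integrable_mul (hz l)) ((hw' k).integrable_mul (hz l))

theorem crossMoment_add_right {w : Ω → ι → ℝ} {z z' : Ω → κ → ℝ}
    (hw : ∀ k, MemLp (fun ω => w ω k) 2 P) (hz : ∀ l, MemLp (fun ω => z ω l) 2 P)
    (hz' : ∀ l, MemLp (fun ω => z' ω l) 2 P) :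
    crossMoment P w (z + z') = crossMoment P w z + crossMoment P w z' := by
  rw [← transpose_crossMoment, crossMoment_add_left hz hz' hw, transpose_add,
    transpose_crossMoment, transpose_crossMoment]

theorem crossMoment_mulVec_add_mulVec [Fintype ι] [DecidableEq ι] {u e : Ω → ι → ℝ}
    (hu : ∀ k, MemLp (fun ω => u ω k) 2 P) (he : ∀ k, MemLp (fun ω => e ω k) 2 P)
    {A V : ℝ}
    (huu : crossMoment P u u = A • 1) (hee : crossMoment P e e = V • 1)
    (hue : crossMoment P u e = 0) (M N : Matrix ι' ι ℝ) :
    crossMoment P (fun ω => M *ᵥ u ω + N *ᵥ e ω) (fun ω => M *ᵥ u ω + N *ᵥ e ω)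
      = A • (M * Mᵀ) + V • (N * Nᵀ) := by
  have hMu := memLp_mulVec_apply hu M
  have hNe := memLp_mulVec_apply he N
  set r := (fun ω => M *ᵥ u ω) + fun ω => N *ᵥ e ω
  change crossMoment P r r = _
  rw [crossMoment_add_left hMu hNe (z := r) fun i => (hMu i).add (hNe i),
    crossMoment_add_right hMu hMu hNe, crossMoment_add_right hNe hMu hNe,
    crossMoment_mulVec hu hu, crossMoment_mulVec hu he, crossMoment_mulVec he hu,
    crossMoment_mulVec he he, ← transpose_crossMoment u e, huu, hee, hue]
  simp

end Moments

section PredictionError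

variable {n R K : Type*} [DecidableEq n]

def predictionErrorMoment [Fintype n] [CommRing R] (A V : R) (C : Matrix n n R) : Matrix n n R :=
  A • ((C - 1) * (C - 1)ᵀ) + V • (C * Cᵀ)

def shrink [CommRing R] (B : R) (P : Matrix n n R) : Matrix n n R :=
  (1 - B) • 1 + B • P

theorem predictionErrorMoment_add_sub [Fintype n] [CommRing R] (A V : R) (C D : Matrix n n R) :
    predictionErrorMoment A V (C + D) - predictionErrorMoment A V C
      = (A • (C - 1) + V • C) * Dᵀ + D * (A • (C - 1) + V • C)ᵀ
        + (A + V) • (D * Dᵀ) := by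
  simp only [predictionErrorMoment, transpose_add, transpose_sub, transpose_smul, transpose_one,
    Matrix.add_mul, Matrix.mul_add, Matrix.sub_mul, Matrix.mul_sub, Matrix.smul_mul,
    Matrix.mul_smul, Matrix.mul_one, Matrix.one_mul, smul_add, smul_sub, add_smul]
  abel

theorem shrink_mul_of_mul_eq {m : Type*} [Fintype n] [CommRing R] (B : R) {P : Matrix n n R}
    {X : Matrix n m R} (h : P * X = X) : shrink B P * X = X := by
  rw [shrink, Matrix.add_mul, Matrix.smul_mul, Matrix.smul_mul, Matrix.one_mul, h, ← add_smul,
    sub_add_cancel, one_smul]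

variable [Field K] {A V B : K}

theorem smul_shrink_sub_one_add_smul_shrink (hVA : V + A ≠ 0) (hB : B = V / (V + A))
    (P : Matrix n n K) : A • (shrink B P - 1) + V • shrink B P = V • P := by
  have hP : A * B + V * B = V := by rw [hB]; field_simp; ring
  have h1 : V * (1 - B) - A * B = 0 := by rw [hB]; field_simp; ring
  calc A • (shrink B P - 1) + V • shrink B P
      = (A * B + V * B) • P + (V * (1 - B) - A * B) • (1 : Matrix n n K) := by
        rw [shrink]; module
    _ = V • P := by rw [hP, h1, zero_smul, add_zero]

theorem predictionErrorMoment_shrink_add_sub [Fintype n] (hVA : V + A ≠ 0) (hB : B = V / (V + A))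
    {P D : Matrix n n K} (hP : Pᵀ = P) (hDP : D * P = 0) :
    predictionErrorMoment A V (shrink B P + D) - predictionErrorMoment A V (shrink B P)
      = (A + V) • (D * Dᵀ) := by
  have hPD : P * Dᵀ = 0 := by rw [← hP, ← transpose_mul, hDP, transpose_zero]
  rw [predictionErrorMoment_add_sub, smul_shrink_sub_one_add_smul_shrink hVA hB, transpose_smul,
    hP, Matrix.smul_mul, hPD, Matrix.mul_smul, hDP, smul_zero, add_zero, zero_add]

end PredictionError

theorem statement1_general {m p : ℕ} (X : Matrix (Fin m) (Fin p) ℝ) (hX : X.rank = p)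
    (A V : ℝ) (hA : 0 < A) (hV : 0 < V)
    {Ω : Type*} [MeasurableSpace Ω] (P : Measure Ω) [IsProbabilityMeasure P]
    (u e : Ω → Fin m → ℝ) (β : Fin p → ℝ)
    (hu2 : ∀ i, MemLp (fun ω => u ω i) 2 P)
    (he2 : ∀ i, MemLp (fun ω => e ω i) 2 P)
    (hu0 : ∀ i, ∫ ω, u ω i ∂P = 0)
    (he0 : ∀ i, ∫ ω, e ω i ∂P = 0)
    (hcovu : ∀ i j, ∫ ω, u ω i * u ω j ∂P = if i = j then A else 0)
    (hcove : ∀ i j, ∫ ω, e ω i * e ω j ∂P = if i = j then V else 0)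
    (hcovue : ∀ i j, ∫ ω, u ω i * e ω j ∂P = 0)
    (θ : Ω → Fin m → ℝ) (hθ : ∀ ω, θ ω = X.mulVec β + u ω)
    (y : Ω → Fin m → ℝ) (hy : ∀ ω, y ω = θ ω + e ω)
    (B : ℝ) (hB : B = V / (V + A))
    -- the MSE matrix of a linear predictor `C y + b`
    (mseMat : Matrix (Fin m) (Fin m) ℝ → (Fin m → ℝ) → Matrix (Fin m) (Fin m) ℝ)
    (hmse : ∀ C b, mseMat C b = Matrix.of fun i j =>
      ∫ ω, (C.mulVec (y ω) i + b i - θ ω i) * (C.mulVec (y ω) j + b j - θ ω j) ∂P)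
    (C : Matrix (Fin m) (Fin m) ℝ) (b : Fin m → ℝ)
    (hunbiased : ∀ β' : Fin p → ℝ, ∀ i,
      ∫ ω, (C.mulVec (X.mulVec β' + u ω + e ω) i + b i) ∂P = X.mulVec β' i) :
    (mseMat C b
      - mseMat ((1 - B) • (1 : Matrix (Fin m) (Fin m) ℝ) + B • projX X) 0).PosSemidef := by
  have hGram : IsUnit (Xᵀ * X) :=
    isUnit_transpose_mul_self_of_rank_eq_card (by rw [hX, Fintype.card_fin])
  obtain ⟨rfl, hCX⟩ : b = 0 ∧ C * X = X := by
    have hnoise : ∀ k, Integrable (fun ω => u ω k + e ω k) P := fun k =>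
      ((hu2 k).integrable one_le_two).add ((he2 k).integrable one_le_two)
    have hnoise0 : ∀ k, ∫ ω, u ω k + e ω k ∂P = 0 := fun k => by
      rw [integral_add ((hu2 k).integrable one_le_two) ((he2 k).integrable one_le_two), hu0, he0,
        add_zero]
    refine forall_mulVec_add_eq_iff.1 fun β' => funext fun i => ?_
    rw [Pi.add_apply, ← hunbiased β' i,
      ← integral_mulVec_add_apply_add_of_integral_eq_zero (w := fun ω => u ω + e ω) hnoise
        hnoise0]
    simp only [add_assoc]
  have huu : crossMoment P u u = A • 1 := by ext i j; simp [crossMoment, hcovu, one_apply]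
  have hee : crossMoment P e e = V • 1 := by ext i j; simp [crossMoment, hcove, one_apply]
  have hue : crossMoment P u e = 0 := by ext i j; simp [crossMoment, hcovue]
  have hmse_eq : ∀ C', C' * X = X → mseMat C' 0 = predictionErrorMoment A V C' := by
    intro C' hC'
    have herr : ∀ ω, C' *ᵥ y ω - θ ω = (C' - 1) *ᵥ u ω + C' *ᵥ e ω := by
      intro ω
      rw [hy, hθ, sub_mulVec, one_mulVec, mulVec_add, mulVec_add, mulVec_mulVec, hC']
      abel
    rw [predictionErrorMoment, ← crossMoment_mulVec_add_mulVec hu2 he2 huu hee hue, hmse]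
    ext i j
    simp only [crossMoment, of_apply, Pi.zero_apply, add_zero, ← Pi.sub_apply, herr]
  set C₀ := shrink B (projX X)
  have hC₀X : C₀ * X = X := shrink_mul_of_mul_eq B (projX_mul_self X hGram)
  have hDP : (C - C₀) * projX X = 0 := by
    rw [projX, ← Matrix.mul_assoc, ← Matrix.mul_assoc, Matrix.sub_mul, hCX, hC₀X, sub_self,
      Matrix.zero_mul, Matrix.zero_mul]
  change (mseMat C 0 - mseMat C₀ 0).PosSemidef
  rw [hmse_eq C hCX, hmse_eq C₀ hC₀X, ← add_sub_cancel C₀ C,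
    predictionErrorMoment_shrink_add_sub (by positivity) hB (transpose_projX X) hDP]
  exact (posSemidef_self_mul_conjTranspose _).smul (by positivity)

/-- In the random effects model `y = Xβ + u + e`, with `u ~ (0, A I_m)`,
`e ~ (0, V I_m)` uncorrelated and `X` of full column rank `p < m`, the estimator
`θ̂^B = ((1-B) I + B P_X) y` is the best linear unbiased predictor of `θ = Xβ + u`:
among all predictors `C y + b` that are unbiased for every `β`, the choice
`C = (1-B) I + B P_X`, `b = 0` minimizes the mean squared prediction error matrix
in the Loewner order. -/
theorem statement1 {m p : ℕ} (hpm : p < m) (X : Matrix (Fin m) (Fin p) ℝ) (hX : X.rank = p)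
    (A V : ℝ) (hA : 0 < A) (hV : 0 < V)
    {Ω : Type*} [MeasurableSpace Ω] (P : Measure Ω) [IsProbabilityMeasure P]
    (u e : Ω → Fin m → ℝ) (β : Fin p → ℝ)
    (hu2 : ∀ i, MemLp (fun ω => u ω i) 2 P)
    (he2 : ∀ i, MemLp (fun ω => e ω i) 2 P)
    (hu0 : ∀ i, ∫ ω, u ω i ∂P = 0)
    (he0 : ∀ i, ∫ ω, e ω i ∂P = 0)
    (hcovu : ∀ i j, ∫ ω, u ω i * u ω j ∂P = if i = j then A else 0)
    (hcove : ∀ i j, ∫ ω, e ω i * e ω j ∂P = if i = j then V else 0)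
    (hcovue : ∀ i j, ∫ ω, u ω i * e ω j ∂P = 0)
    (θ : Ω → Fin m → ℝ) (hθ : ∀ ω, θ ω = X.mulVec β + u ω)
    (y : Ω → Fin m → ℝ) (hy : ∀ ω, y ω = θ ω + e ω)
    (B : ℝ) (hB : B = V / (V + A))
    -- the MSE matrix of a linear predictor `C y + b`
    (mseMat : Matrix (Fin m) (Fin m) ℝ → (Fin m → ℝ) → Matrix (Fin m) (Fin m) ℝ)
    (hmse : ∀ C b, mseMat C b = Matrix.of fun i j =>
      ∫ ω, (C.mulVec (y ω) i + b i - θ ω i) * (C.mulVec (y ω) j + b j - θ ω j) ∂P)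
    (C : Matrix (Fin m) (Fin m) ℝ) (b : Fin m → ℝ)
    (hunbiased : ∀ β' : Fin p → ℝ, ∀ i,
      ∫ ω, (C.mulVec (X.mulVec β' + u ω + e ω) i + b i) ∂P = X.mulVec β' i) :
    (mseMat C b
      - mseMat ((1 - B) • (1 : Matrix (Fin m) (Fin m) ℝ) + B • projX X) 0).PosSemidef :=
  statement1_general X hX A V hA hV P u e β hu2 he2 hu0 he0 hcovu hcove hcovue θ hθ y hy B hB mseMat
    hmse C b hunbiased
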